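/- arXiv:2207.06083 — 3 statements merged into one kernel-verified Lean document; each statement's English description precedes it below -/
import Mathlib

section
/- For all 0 ≤ i ≤ j ≤ n, the binary search tree reconstructed from the tracking table Cut is optimal: letting Build(i,i) be the single leaf d_i and, for i < j, Build(i,j) be the tree with root key k_{Cut[i,j]+1}, left subtree Build(i,Cut[i,j]) and right subtree Build(Cut[i,j]+1,j), the tree Build(i,j) is a binary search tree on keys k_{i+1},…,k_j with dummy keys d_i,…,d_j and Cost(Build(i,j)) = Tree[i,j]. -/
/-!
Lowering a search tree by one level adds its total probability weight `w(i,j)` to its cost.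
Hence a tree with root `k_{r+1}` and subtrees `L`, `R` costs `Cost L + Cost R + w(i,j)`, which is
exactly the recurrence that `Tree` satisfies at the split point `Cut[i,j]`; induction on `j - i`
then shows that the reconstructed tree costs `Tree[i,j]`.
-/

/-- Binary trees whose leaves carry dummy keys `d_i` (stored as `i`) and whose
internal nodes carry keys `k_{r+1}` (stored as `r`). -/
inductive BST : Type
  | leaf (i : ℕ) : BST
  | node (r : ℕ) (L R : BST) : BST

/-- `IsBST t i j` : `t` is a binary search tree on the keys `k_{i+1}, …, k_j`
with dummy keys `d_i, …, d_j`. -/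
inductive IsBST : BST → ℕ → ℕ → Prop
  | leaf (i : ℕ) : IsBST (.leaf i) i i
  | node {i r j : ℕ} {L R : BST} (h1 : i ≤ r) (h2 : r < j)
      (hL : IsBST L i r) (hR : IsBST R (r + 1) j) :
      IsBST (.node r L R) i j

/-- `cost P Q t d` : total search cost of the tree `t` whose root is at depth `d`:
a node at depth `e` carrying key `k_{r+1}` contributes `e * P (r+1)`, a leaf at
depth `e` carrying dummy key `d_i` contributes `e * Q i`.  The cost of the whole
tree is `cost P Q t 1` (the root has depth 1). -/
noncomputable def cost (P Q : ℕ → ℝ) : BST → ℕ → ℝ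
  | .leaf i, d => d * Q i
  | .node r L R, d => d * P (r + 1) + cost P Q L (d + 1) + cost P Q R (d + 1)

/-- The tree reconstructed from the tracking table `Cut` : `Build Cut i i` is the
single leaf `d_i` and, for `i < j`, `Build Cut i j` is the tree with root key
`k_{Cut[i,j]+1}`, left subtree `Build Cut i (Cut i j)` and right subtree
`Build Cut (Cut i j + 1) j`.  (The extra guard `i ≤ Cut i j ∧ Cut i j < j`,
needed for termination, is automatically satisfied by any tracking table of
smallest optimal split points.) -/
def Build (Cut : ℕ → ℕ → ℕ) : ℕ → ℕ → BST
  | i, j =>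
    if h : i < j ∧ i ≤ Cut i j ∧ Cut i j < j then
      .node (Cut i j) (Build Cut i (Cut i j)) (Build Cut (Cut i j + 1) j)
    else .leaf i
  termination_by i j => j - i
  decreasing_by
  · omega
  · omega

open Finset

def weight (P Q : ℕ → ℝ) (i j : ℕ) : ℝ :=
  (∑ t ∈ Icc (i + 1) j, P t) + ∑ t ∈ Icc i j, Q t

section Weight

variable (P Q : ℕ → ℝ)

theorem weight_self (i : ℕ) : weight P Q i i = Q i := by
  simp [weight]

theorem weight_split {i r j : ℕ} (hir : i ≤ r) (hrj : r < j) :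
    weight P Q i j = weight P Q i r + weight P Q (r + 1) j + P (r + 1) := by
  have hP : ∑ t ∈ Icc (i + 1) j, P t =
      ∑ t ∈ Icc (i + 1) r, P t + P (r + 1) + ∑ t ∈ Icc (r + 1 + 1) j, P t := by
    simp only [Icc_add_one_left_eq_Ioc]
    rw [← sum_Ioc_consecutive P (by omega : i ≤ r + 1) hrj, sum_Ioc_succ_top hir]
  have hQ : ∑ t ∈ Icc i j, Q t = ∑ t ∈ Icc i r, Q t + ∑ t ∈ Icc (r + 1) j, Q t := by
    simp only [← Ico_add_one_right_eq_Icc]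
    exact (sum_Ico_consecutive Q (by omega) (by omega)).symm
  rw [weight, weight, weight, hP, hQ]
  ring

end Weight

theorem IsBST.cost_add_one (P Q : ℕ → ℝ) {t : BST} {i j : ℕ} (ht : IsBST t i j) (d : ℕ) :
    cost P Q t (d + 1) = cost P Q t d + weight P Q i j := by
  induction ht generalizing d with
  | leaf i =>
    rw [cost, cost, weight_self]
    push_cast
    ring
  | node hir hrj _ _ ihL ihR =>
    rw [cost, cost, ihL, ihR, weight_split P Q hir hrj]
    push_cast
    ring

section Build

variable (Cut : ℕ → ℕ → ℕ)

theorem build_self (i : ℕ) : Build Cut i i = .leaf i := by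
  rw [Build, dif_neg (by omega)]

theorem build_eq_node {i j : ℕ} (hij : i < j) (hik : i ≤ Cut i j) (hkj : Cut i j < j) :
    Build Cut i j = .node (Cut i j) (Build Cut i (Cut i j)) (Build Cut (Cut i j + 1) j) := by
  rw [Build, dif_pos ⟨hij, hik, hkj⟩]

theorem isBST_build_and_cost_eq (P Q : ℕ → ℝ) (n : ℕ) (Tree : ℕ → ℕ → ℝ)
    (hTree0 : ∀ i ≤ n, Tree i i = Q i)
    (hCut : ∀ i j, i < j → j ≤ n → i ≤ Cut i j ∧ Cut i j < j ∧
      Tree i j = Tree i (Cut i j) + Tree (Cut i j + 1) j + weight P Q i j)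
    {i j : ℕ} (hij : i ≤ j) (hjn : j ≤ n) :
    IsBST (Build Cut i j) i j ∧ cost P Q (Build Cut i j) 1 = Tree i j := by
  induction hd : j - i using Nat.strong_induction_on generalizing i j with
  | _ m ih =>
    rcases hij.eq_or_lt with rfl | hlt
    · rw [build_self]
      exact ⟨.leaf i, by simp [cost, hTree0 i hjn]⟩
    · obtain ⟨hik, hkj, hsplit⟩ := hCut i j hlt hjn
      obtain ⟨hL, hcostL⟩ := ih _ (by omega) hik (by omega) rfl
      obtain ⟨hR, hcostR⟩ := ih _ (by omega) (Nat.succ_le_of_lt hkj) hjn rfl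
      rw [build_eq_node Cut hlt hik hkj]
      refine ⟨.node hik hkj hL hR, ?_⟩
      rw [cost, hL.cost_add_one, hR.cost_add_one, hcostL, hcostR, hsplit,
        weight_split P Q hik hkj]
      push_cast
      ring

end Build

theorem stmt1_general (n : ℕ) (P Q : ℕ → ℝ)
    (w : ℕ → ℕ → ℝ)
    (hw : ∀ i j, i ≤ j → j ≤ n →
      w i j = (∑ t ∈ Finset.Icc (i + 1) j, P t) + ∑ t ∈ Finset.Icc i j, Q t)
    (Tree : ℕ → ℕ → ℝ)
    (hTree0 : ∀ i, i ≤ n → Tree i i = Q i)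
    (Cut : ℕ → ℕ → ℕ)
    (hCut : ∀ i j, i < j → j ≤ n →
      IsLeast { k : ℕ | i ≤ k ∧ k < j ∧
        Tree i j = Tree i k + Tree (k + 1) j + w i j } (Cut i j)) :
    ∀ i j, i ≤ j → j ≤ n →
      IsBST (Build Cut i j) i j ∧ cost P Q (Build Cut i j) 1 = Tree i j := by
  refine fun i j hij hjn => isBST_build_and_cost_eq Cut P Q n Tree hTree0 ?_ hij hjn
  intro i j hij hjn
  obtain ⟨hik, hkj, hsplit⟩ := (hCut i j hij hjn).1
  exact ⟨hik, hkj, hsplit.trans (by rw [hw i j hij.le hjn, weight])⟩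

/-- For all `0 ≤ i ≤ j ≤ n`, the binary search tree reconstructed from the
tracking table `Cut` (of smallest optimal split points) is optimal:
`Build Cut i j` is a binary search tree on keys `k_{i+1}, …, k_j` with dummy
keys `d_i, …, d_j`, and `Cost(Build Cut i j) = Tree[i,j]`. -/
theorem stmt1 (n : ℕ) (hn : 1 ≤ n) (P Q : ℕ → ℝ)
    (hP : ∀ t, 1 ≤ t → t ≤ n → 0 ≤ P t) (hQ : ∀ t, t ≤ n → 0 ≤ Q t)
    (w : ℕ → ℕ → ℝ)
    (hw : ∀ i j, i ≤ j → j ≤ n →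
      w i j = (∑ t ∈ Finset.Icc (i + 1) j, P t) + ∑ t ∈ Finset.Icc i j, Q t)
    (Tree : ℕ → ℕ → ℝ)
    (hTree0 : ∀ i, i ≤ n → Tree i i = Q i)
    (hTree : ∀ i j (hij : i < j), j ≤ n →
      Tree i j = (Finset.Ico i j).inf' (Finset.nonempty_Ico.mpr hij)
        (fun k => Tree i k + Tree (k + 1) j + w i j))
    (Cut : ℕ → ℕ → ℕ)
    (hCut : ∀ i j, i < j → j ≤ n →
      IsLeast { k : ℕ | i ≤ k ∧ k < j ∧
        Tree i j = Tree i k + Tree (k + 1) j + w i j } (Cut i j)) :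
    ∀ i j, i ≤ j → j ≤ n →
      IsBST (Build Cut i j) i j ∧ cost P Q (Build Cut i j) 1 = Tree i j :=
  stmt1_general n P Q w hw Tree hTree0 Cut hCut
end

section
/- Knuth's monotonicity property holds: the entries of the tracking table Cut satisfy Cut[i,j-1] ≤ Cut[i,j] ≤ Cut[i+1,j] for all 0 ≤ i < j ≤ n (with the convention Cut[i,i] = i). -/
/-!
Yao's argument. Prefix sums make the weight `w` satisfy the quadrangle inequality (with
equality), and nonnegativity makes it monotone under inclusion of intervals. By induction on
the length of the outer interval, the optimal costs `Tree` inherit the quadrangle inequality: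
compare the two outer optimal trees with suboptimal trees for the inner intervals obtained by
exchanging subtrees at their roots. Knuth's monotonicity then follows: if the least optimal
root moved the wrong way, exchanging subtrees through the quadrangle inequality for `Tree`
would give an optimal root smaller than the least one.
-/

open Finset

def QuadrangleIneq (n : ℕ) (f : ℕ → ℕ → ℝ) : Prop :=
  ∀ i i' j j', i ≤ i' → i' ≤ j → j ≤ j' → j' ≤ n → f i j + f i' j' ≤ f i' j + f i j'

def IntervalMonotone (n : ℕ) (f : ℕ → ℕ → ℝ) : Prop :=
  ∀ i i' j j', i' ≤ i → i ≤ j → j ≤ j' → j' ≤ n → f i j ≤ f i' j'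

def SplitRecurrence (n : ℕ) (w T : ℕ → ℕ → ℝ) : Prop :=
  ∀ i j (hij : i < j), j ≤ n →
    T i j = (Ico i j).inf' (nonempty_Ico.mpr hij) (fun k => T i k + T (k + 1) j + w i j)

def optimalSplits (w T : ℕ → ℕ → ℝ) (i j : ℕ) : Set ℕ :=
  {k | i ≤ k ∧ k < j ∧ T i j = T i k + T (k + 1) j + w i j}

theorem sum_Ioc_add_sum_Ioc_eq {M : Type*} [AddCommMonoid M] (f : ℕ → M) {i i' j j' : ℕ}
    (h1 : i ≤ i') (h2 : i' ≤ j) (h3 : j ≤ j') :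
    ∑ t ∈ Ioc i j, f t + ∑ t ∈ Ioc i' j', f t = ∑ t ∈ Ioc i' j, f t + ∑ t ∈ Ioc i j', f t := by
  rw [← sum_Ioc_consecutive f h1 h2, ← sum_Ioc_consecutive f h1 (h2.trans h3)]
  abel

section Weight

variable {n : ℕ} {P Q : ℕ → ℝ} {w : ℕ → ℕ → ℝ}

theorem quadrangleIneq_of_eq_sum
    (hw : ∀ i j, i ≤ j → j ≤ n →
      w i j = (∑ t ∈ Icc (i + 1) j, P t) + ∑ t ∈ Icc i j, Q t) :
    QuadrangleIneq n w := by
  have hw' : ∀ i j, i ≤ j → j ≤ n → w i j = ∑ t ∈ Ioc i j, (P t + Q t) + Q i := by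
    intro i j hij hj
    rw [hw i j hij hj, Icc_add_one_left_eq_Ioc, Icc_eq_cons_Ioc hij, sum_cons, sum_add_distrib]
    ring
  intro i i' j j' h1 h2 h3 h4
  rw [hw' i j (h1.trans h2) (h3.trans h4), hw' i' j' (h2.trans h3) h4,
    hw' i' j h2 (h3.trans h4), hw' i j' ((h1.trans h2).trans h3) h4]
  linarith [sum_Ioc_add_sum_Ioc_eq (fun t => P t + Q t) h1 h2 h3]

theorem intervalMonotone_of_eq_sum (hP : ∀ t, 1 ≤ t → t ≤ n → 0 ≤ P t)
    (hQ : ∀ t, t ≤ n → 0 ≤ Q t)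
    (hw : ∀ i j, i ≤ j → j ≤ n →
      w i j = (∑ t ∈ Icc (i + 1) j, P t) + ∑ t ∈ Icc i j, Q t) :
    IntervalMonotone n w := by
  intro i i' j j' h1 h2 h3 h4
  rw [hw i j h2 (h3.trans h4), hw i' j' (h1.trans (h2.trans h3)) h4]
  refine add_le_add ?_ ?_
  · refine sum_le_sum_of_subset_of_nonneg (Icc_subset_Icc (by omega) h3) fun t ht _ => ?_
    rw [mem_Icc] at ht
    exact hP t (by omega) (by omega)
  · refine sum_le_sum_of_subset_of_nonneg (Icc_subset_Icc h1 h3) fun t ht _ => ?_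
    exact hQ t ((mem_Icc.mp ht).2.trans h4)

end Weight

namespace SplitRecurrence

variable {n : ℕ} {w T : ℕ → ℕ → ℝ} {i i' j j' k c c' : ℕ}

theorem le_split (hT : SplitRecurrence n w T) (hik : i ≤ k) (hkj : k < j) (hj : j ≤ n) :
    T i j ≤ T i k + T (k + 1) j + w i j := by
  rw [hT i j (hik.trans_lt hkj) hj]
  exact inf'_le _ (mem_Ico.mpr ⟨hik, hkj⟩)

theorem exists_mem_optimalSplits (hT : SplitRecurrence n w T) (hij : i < j) (hj : j ≤ n) :
    ∃ k, k ∈ optimalSplits w T i j := by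
  obtain ⟨k, hk, hTk⟩ := exists_mem_eq_inf' (nonempty_Ico.mpr hij)
    (fun k => T i k + T (k + 1) j + w i j)
  exact ⟨k, (mem_Ico.mp hk).1, (mem_Ico.mp hk).2, (hT i j hij hj).trans hTk⟩

theorem lt_split_of_lt_of_isLeast (hT : SplitRecurrence n w T)
    (hc : IsLeast (optimalSplits w T i j) c) (hik : i ≤ k) (hkc : k < c) (hj : j ≤ n) :
    T i j < T i k + T (k + 1) j + w i j := by
  have hkj : k < j := hkc.trans hc.1.2.1
  refine (hT.le_split hik hkj hj).lt_of_ne fun h => ?_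
  exact hkc.not_ge (hc.2 ⟨hik, hkj, h⟩)

/- The two cases of the induction step of `quadrangleIneq`; `ih` is the quadrangle inequality
for `T` on intervals shorter than `[i, j']`. -/

theorem quadrangle_step_of_eq (hT : SplitRecurrence n w T) (hwM : IntervalMonotone n w)
    (hii' : i < i') (hi'j' : i' ≤ j') (hj' : j' ≤ n)
    (ih : ∀ a a' b b', a ≤ a' → a' ≤ b → b ≤ b' → b' ≤ n → b' - a < j' - i →
      T a b + T a' b' ≤ T a' b + T a b') :
    T i i' + T i' j' ≤ T i' i' + T i j' := by
  obtain ⟨k, hik, hkj', hk⟩ := hT.exists_mem_optimalSplits (hii'.trans_le hi'j') hj'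
  rcases lt_or_ge k i' with hki' | hi'k
  · have h1 := hT.le_split hik hki' (hi'j'.trans hj')
    have h2 := ih (k + 1) i' i' j' (by omega) le_rfl hi'j' hj' (by omega)
    have h3 := hwM i i i' j' le_rfl hii'.le hi'j' hj'
    linarith
  · have h1 := hT.le_split hi'k hkj' hj'
    have h2 := ih i i' i' k hii'.le le_rfl hi'k (by omega) (by omega)
    have h3 := hwM i' i j' j' hii'.le hi'j' le_rfl hj'
    linarith

theorem quadrangle_step_of_lt (hT : SplitRecurrence n w T) (hwQ : QuadrangleIneq n w)
    (hii' : i ≤ i') (hi'j : i' < j) (hjj' : j ≤ j') (hj' : j' ≤ n)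
    (ih : ∀ a a' b b', a ≤ a' → a' ≤ b → b ≤ b' → b' ≤ n → b' - a < j' - i →
      T a b + T a' b' ≤ T a' b + T a b') :
    T i j + T i' j' ≤ T i' j + T i j' := by
  obtain ⟨k, hik, hkj', hk⟩ := hT.exists_mem_optimalSplits (by omega : i < j') hj'
  obtain ⟨l, hi'l, hlj, hl⟩ := hT.exists_mem_optimalSplits hi'j (hjj'.trans hj')
  have hw := hwQ i i' j j' hii' hi'j.le hjj' hj'
  rcases le_or_gt k l with hkl | hlk
  · have h1 := hT.le_split hik (hkl.trans_lt hlj) (hjj'.trans hj')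
    have h2 := hT.le_split hi'l (hlj.trans_le hjj') hj'
    have h3 := ih (k + 1) (l + 1) j j' (by omega) hlj hjj' hj' (by omega)
    linarith
  · have h1 := hT.le_split (hii'.trans hi'l) hlj (hjj'.trans hj')
    have h2 := hT.le_split (hi'l.trans hlk.le) hkj' hj'
    have h3 := ih i i' l k hii' hi'l hlk.le (by omega) (by omega)
    linarith

/-- Yao's theorem (1980). -/
theorem quadrangleIneq (hT : SplitRecurrence n w T) (hwQ : QuadrangleIneq n w)
    (hwM : IntervalMonotone n w) : QuadrangleIneq n T := by
  intro i i' j j' h1 h2 h3 h4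
  induction hm : j' - i using Nat.strong_induction_on generalizing i i' j j' with
  | _ m ih =>
    have ih' : ∀ a a' b b', a ≤ a' → a' ≤ b → b ≤ b' → b' ≤ n → b' - a < j' - i →
        T a b + T a' b' ≤ T a' b + T a b' := fun a a' b b' g1 g2 g3 g4 g5 =>
      ih _ (hm ▸ g5) a a' b b' g1 g2 g3 g4 rfl
    rcases h1.eq_or_lt with rfl | hii'
    · exact le_rfl
    rcases h2.eq_or_lt with rfl | hi'j
    · exact hT.quadrangle_step_of_eq hwM hii' h3 h4 ih'
    · exact hT.quadrangle_step_of_lt hwQ h1 hi'j h3 h4 ih'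

theorem le_of_isLeast_of_le_right (hT : SplitRecurrence n w T) (hTQ : QuadrangleIneq n T)
    (hjj' : j ≤ j') (hj' : j' ≤ n) (hc : IsLeast (optimalSplits w T i j) c)
    (hc' : IsLeast (optimalSplits w T i j') c') : c ≤ c' := by
  by_contra! hc'c
  obtain ⟨hic, hcj, hTc⟩ := hc.1
  obtain ⟨hic', -, hTc'⟩ := hc'.1
  have h1 := hT.lt_split_of_lt_of_isLeast hc hic' hc'c (hjj'.trans hj')
  have h2 := hT.le_split hic (hcj.trans_le hjj') hj'
  have h3 := hTQ (c' + 1) (c + 1) j j' (by omega) hcj hjj' hj'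
  linarith

theorem le_of_isLeast_of_le_left (hT : SplitRecurrence n w T) (hTQ : QuadrangleIneq n T)
    (hii' : i ≤ i') (hj : j ≤ n) (hc : IsLeast (optimalSplits w T i j) c)
    (hc' : IsLeast (optimalSplits w T i' j) c') : c ≤ c' := by
  by_contra! hc'c
  obtain ⟨-, hcj, hTc⟩ := hc.1
  obtain ⟨hi'c', -, hTc'⟩ := hc'.1
  have h1 := hT.lt_split_of_lt_of_isLeast hc (hii'.trans hi'c') hc'c hj
  have h2 := hT.le_split (hi'c'.trans hc'c.le) hcj hj
  have h3 := hTQ i i' c' c hii' hi'c' hc'c.le (by omega)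
  linarith

end SplitRecurrence

theorem stmt4_general (n : ℕ) (P Q : ℕ → ℝ)
    (hP : ∀ t, 1 ≤ t → t ≤ n → 0 ≤ P t) (hQ : ∀ t, t ≤ n → 0 ≤ Q t)
    (w : ℕ → ℕ → ℝ)
    (hw : ∀ i j, i ≤ j → j ≤ n →
      w i j = (∑ t ∈ Finset.Icc (i + 1) j, P t) + ∑ t ∈ Finset.Icc i j, Q t)
    (Tree : ℕ → ℕ → ℝ)
    (hTree : ∀ i j (hij : i < j), j ≤ n →
      Tree i j = (Finset.Ico i j).inf' (Finset.nonempty_Ico.mpr hij)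
        (fun k => Tree i k + Tree (k + 1) j + w i j))
    (Cut : ℕ → ℕ → ℕ)
    (hCut0 : ∀ i, i ≤ n → Cut i i = i)
    (hCut : ∀ i j, i < j → j ≤ n →
      IsLeast { k : ℕ | i ≤ k ∧ k < j ∧
        Tree i j = Tree i k + Tree (k + 1) j + w i j } (Cut i j)) :
    ∀ i j, i < j → j ≤ n →
      Cut i (j - 1) ≤ Cut i j ∧ Cut i j ≤ Cut (i + 1) j := by
  have hT : SplitRecurrence n w Tree := hTree
  have hTQ : QuadrangleIneq n Tree := hT.quadrangleIneq (quadrangleIneq_of_eq_sum hw)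
    (intervalMonotone_of_eq_sum hP hQ hw)
  intro i j hij hj
  have hc := hCut i j hij hj
  constructor
  · rcases (Nat.le_sub_one_of_lt hij).eq_or_lt with hji | hij'
    · rw [← hji, hCut0 i (hij.le.trans hj)]
      exact hc.1.1
    · exact hT.le_of_isLeast_of_le_right hTQ (j.sub_le 1) hj (hCut i (j - 1) hij' (by omega)) hc
  · rcases (show i + 1 ≤ j from hij).eq_or_lt with hij' | hij'
    · rw [hij', hCut0 j hj]
      exact hc.1.2.1.le
    · exact hT.le_of_isLeast_of_le_left hTQ i.le_succ hj hc (hCut (i + 1) j hij' hj)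

/-- Knuth's monotonicity property: the entries of the tracking table `Cut`
(smallest optimal split points, with the convention `Cut[i,i] = i`) satisfy
`Cut[i,j-1] ≤ Cut[i,j] ≤ Cut[i+1,j]` for all `0 ≤ i < j ≤ n`. -/
theorem stmt4 (n : ℕ) (hn : 1 ≤ n) (P Q : ℕ → ℝ)
    (hP : ∀ t, 1 ≤ t → t ≤ n → 0 ≤ P t) (hQ : ∀ t, t ≤ n → 0 ≤ Q t)
    (w : ℕ → ℕ → ℝ)
    (hw : ∀ i j, i ≤ j → j ≤ n →
      w i j = (∑ t ∈ Finset.Icc (i + 1) j, P t) + ∑ t ∈ Finset.Icc i j, Q t)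
    (Tree : ℕ → ℕ → ℝ)
    (hTree0 : ∀ i, i ≤ n → Tree i i = Q i)
    (hTree : ∀ i j (hij : i < j), j ≤ n →
      Tree i j = (Finset.Ico i j).inf' (Finset.nonempty_Ico.mpr hij)
        (fun k => Tree i k + Tree (k + 1) j + w i j))
    (Cut : ℕ → ℕ → ℕ)
    (hCut0 : ∀ i, i ≤ n → Cut i i = i)
    (hCut : ∀ i j, i < j → j ≤ n →
      IsLeast { k : ℕ | i ≤ k ∧ k < j ∧
        Tree i j = Tree i k + Tree (k + 1) j + w i j } (Cut i j)) :
    ∀ i j, i < j → j ≤ n →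
      Cut i (j - 1) ≤ Cut i j ∧ Cut i j ≤ Cut (i + 1) j :=
  stmt4_general n P Q hP hQ w hw Tree hTree Cut hCut0 hCut
end

section
/- Vertical jumps are redundant: let D'_n be the subgraph of D_n obtained by deleting all vertical jumps (all edges (k+1,j)→(i,j) with 0 ≤ i ≤ k and k+1 < j ≤ n). Then for every vertex (i,j) with 0 ≤ i ≤ j ≤ n, the minimum total weight over directed paths from (−1,−1) to (i,j) in D'_n equals the minimum total weight over directed paths from (−1,−1) to (i,j) in D_n, and both equal Tree[i,j]. -/
/-- The weighted edges of the dynamic graph `D_n`.  Vertices live in `ℤ × ℤ`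
(the source is `(-1,-1)`; all other vertices `(i,j)` have `0 ≤ i ≤ j ≤ n`).
`Edge n Q w T u v c` means there is an edge from `u` to `v` of weight `c`. -/
inductive Edge (n : ℕ) (Q : ℕ → ℝ) (w T : ℕ → ℕ → ℝ) : ℤ × ℤ → ℤ × ℤ → ℝ → Prop
  | init (i : ℕ) (h : i ≤ n) :
      Edge n Q w T (-1, -1) ((i : ℤ), (i : ℤ)) (Q i)
  | horiz (i j : ℕ) (h1 : i ≤ j) (h2 : j < n) :
      Edge n Q w T ((i : ℤ), (j : ℤ)) ((i : ℤ), ((j + 1 : ℕ) : ℤ))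
        (Q (j + 1) + w i (j + 1))
  | vert (i j : ℕ) (h0 : 0 < i) (h1 : i ≤ j) (h2 : j ≤ n) :
      Edge n Q w T ((i : ℤ), (j : ℤ)) (((i - 1 : ℕ) : ℤ), (j : ℤ))
        (Q (i - 1) + w (i - 1) j)
  | hjump (i k j : ℕ) (h1 : i < k) (h2 : k < j) (h3 : j ≤ n) :
      Edge n Q w T ((i : ℤ), (k : ℤ)) ((i : ℤ), (j : ℤ)) (T (k + 1) j + w i j)
  | vjump (i k j : ℕ) (h1 : i ≤ k) (h2 : k + 1 < j) (h3 : j ≤ n) :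
      Edge n Q w T (((k + 1 : ℕ) : ℤ), (j : ℤ)) ((i : ℤ), (j : ℤ)) (T i k + w i j)

/-- The weighted edges of the subgraph `D'_n` of `D_n` obtained by deleting all
vertical jumps (all edges `(k+1,j)→(i,j)` with `0 ≤ i ≤ k` and `k+1 < j ≤ n`). -/
inductive EdgeNoVJump (n : ℕ) (Q : ℕ → ℝ) (w T : ℕ → ℕ → ℝ) :
    ℤ × ℤ → ℤ × ℤ → ℝ → Prop
  | init (i : ℕ) (h : i ≤ n) :
      EdgeNoVJump n Q w T (-1, -1) ((i : ℤ), (i : ℤ)) (Q i)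
  | horiz (i j : ℕ) (h1 : i ≤ j) (h2 : j < n) :
      EdgeNoVJump n Q w T ((i : ℤ), (j : ℤ)) ((i : ℤ), ((j + 1 : ℕ) : ℤ))
        (Q (j + 1) + w i (j + 1))
  | vert (i j : ℕ) (h0 : 0 < i) (h1 : i ≤ j) (h2 : j ≤ n) :
      EdgeNoVJump n Q w T ((i : ℤ), (j : ℤ)) (((i - 1 : ℕ) : ℤ), (j : ℤ))
        (Q (i - 1) + w (i - 1) j)
  | hjump (i k j : ℕ) (h1 : i < k) (h2 : k < j) (h3 : j ≤ n) :
      EdgeNoVJump n Q w T ((i : ℤ), (k : ℤ)) ((i : ℤ), (j : ℤ))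
        (T (k + 1) j + w i j)

/-- `Walk E u v c` : there is a directed path (a finite sequence of consecutive
edges) from `u` to `v` of total weight `c` in the graph whose weighted edge
relation is `E`. -/
inductive Walk {α : Type*} (E : α → α → ℝ → Prop) : α → α → ℝ → Prop
  | nil (a : α) : Walk E a a 0
  | cons {a b d : α} {c c' : ℝ} (h : E a b c) (hw : Walk E b d c') :
      Walk E a d (c + c')

/-! `Tree` is a feasible potential on `D_n`: along every edge `u → v` of weight `c` we have
`Tree v ≤ Tree u + c` (with potential `0` at the source), because each edge weight into
`(i,j)` is, after adding the potential of its tail, one of the terms of the minimum defining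
`Tree[i,j]`. Summing along a path, every path from `(-1,-1)` to `(i,j)` weighs at least
`Tree[i,j]`.

Conversely, pick an optimal split `k` of `Tree[i,j]`: for `k = i` it is realised by the vertical
unit edge `(i+1,j) → (i,j)`, for `k > i` by the horizontal jump `(i,k) → (i,j)`. By induction on
`j - i` this gives a path of weight exactly `Tree[i,j]` that uses no vertical jump. -/

namespace Walk

variable {α : Type*} {E E' : α → α → ℝ → Prop} {u v x : α} {c c' : ℝ}

lemma of_eq (h : Walk E u v c) (e : c = c') : Walk E u v c' := e ▸ h

lemma single (h : E u v c) : Walk E u v c :=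
  (cons h (nil v)).of_eq (add_zero c)

lemma mono (hE : ∀ u v c, E u v c → E' u v c) (h : Walk E u v c) : Walk E' u v c := by
  induction h with
  | nil a => exact nil a
  | cons h _ ih => exact cons (hE _ _ _ h) ih

lemma snoc (h : Walk E u v c) (he : E v x c') : Walk E u x (c + c') := by
  induction h with
  | nil a => exact (single he).of_eq (zero_add c').symm
  | cons h _ ih => exact (cons h (ih he)).of_eq (add_assoc _ _ _).symm

lemma potential_le {φ : α → ℝ} (hφ : ∀ u v c, E u v c → φ v ≤ φ u + c)
    (h : Walk E u v c) : φ v ≤ φ u + c := by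
  induction h with
  | nil a => simp
  | cons h _ ih => linarith [hφ _ _ _ h]

end Walk

lemma EdgeNoVJump.toEdge {n : ℕ} {Q : ℕ → ℝ} {w T : ℕ → ℕ → ℝ} {u v : ℤ × ℤ} {c : ℝ}
    (h : EdgeNoVJump n Q w T u v c) : Edge n Q w T u v c := by
  cases h with
  | init i h => exact .init i h
  | horiz i j h1 h2 => exact .horiz i j h1 h2
  | vert i j h0 h1 h2 => exact .vert i j h0 h1 h2
  | hjump i k j h1 h2 h3 => exact .hjump i k j h1 h2 h3

def treePotential (T : ℕ → ℕ → ℝ) (p : ℤ × ℤ) : ℝ :=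
  if p.1 = -1 then 0 else T p.1.toNat p.2.toNat

@[simp]
lemma treePotential_natCast (T : ℕ → ℕ → ℝ) (i j : ℕ) :
    treePotential T ((i : ℤ), (j : ℤ)) = T i j := by
  simp [treePotential, show (i : ℤ) ≠ -1 by omega]

@[simp]
lemma treePotential_source (T : ℕ → ℕ → ℝ) : treePotential T (-1, -1) = 0 := by
  simp [treePotential]

section TreeRecurrence

variable {n : ℕ} {Q : ℕ → ℝ} {w Tree : ℕ → ℕ → ℝ}
  (hTree0 : ∀ i, i ≤ n → Tree i i = Q i)
  (hTree : ∀ i j (hij : i < j), j ≤ n →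
    Tree i j = (Finset.Ico i j).inf' (Finset.nonempty_Ico.mpr hij)
      (fun k => Tree i k + Tree (k + 1) j + w i j))
include hTree

lemma tree_le_split {i k j : ℕ} (hik : i ≤ k) (hkj : k < j) (hjn : j ≤ n) :
    Tree i j ≤ Tree i k + Tree (k + 1) j + w i j := by
  rw [hTree i j (hik.trans_lt hkj) hjn]
  exact Finset.inf'_le (fun k => Tree i k + Tree (k + 1) j + w i j)
    (Finset.mem_Ico.mpr ⟨hik, hkj⟩)

lemma exists_tree_eq_split {i j : ℕ} (hij : i < j) (hjn : j ≤ n) :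
    ∃ k, (i ≤ k ∧ k < j) ∧ Tree i j = Tree i k + Tree (k + 1) j + w i j := by
  obtain ⟨k, hk, hmin⟩ := Finset.exists_mem_eq_inf' (Finset.nonempty_Ico.mpr hij)
    (fun k => Tree i k + Tree (k + 1) j + w i j)
  exact ⟨k, Finset.mem_Ico.mp hk, (hTree i j hij hjn).trans hmin⟩

include hTree0

lemma treePotential_le_of_edge {u v : ℤ × ℤ} {c : ℝ} (h : Edge n Q w Tree u v c) :
    treePotential Tree v ≤ treePotential Tree u + c := by
  cases h with
  | init i h => simp [hTree0 i h]
  | horiz i j h1 h2 =>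
    have := tree_le_split hTree h1 j.lt_succ_self h2
    simp only [treePotential_natCast]
    linarith [hTree0 (j + 1) h2]
  | vert i j h0 h1 h2 =>
    have := tree_le_split hTree le_rfl (by omega : i - 1 < j) h2
    rw [Nat.sub_add_cancel h0] at this
    simp only [treePotential_natCast]
    linarith [hTree0 (i - 1) (by omega)]
  | hjump i k j h1 h2 h3 =>
    have := tree_le_split hTree h1.le h2 h3
    simp only [treePotential_natCast]
    linarith
  | vjump i k j h1 h2 h3 =>
    have := tree_le_split hTree h1 (by omega : k < j) h3
    simp only [treePotential_natCast]
    linarith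

lemma tree_le_of_walk {i j : ℕ} {c : ℝ}
    (h : Walk (Edge n Q w Tree) (-1, -1) ((i : ℤ), (j : ℤ)) c) : Tree i j ≤ c := by
  simpa using h.potential_le fun _ _ _ he => treePotential_le_of_edge hTree0 hTree he

theorem walk_noVJump_tree (i j : ℕ) (hij : i ≤ j) (hjn : j ≤ n) :
    Walk (EdgeNoVJump n Q w Tree) (-1, -1) ((i : ℤ), (j : ℤ)) (Tree i j) := by
  rcases hij.eq_or_lt with rfl | hlt
  · exact (Walk.single (.init i hjn)).of_eq (hTree0 i hjn).symm
  obtain ⟨k, ⟨hik, hkj⟩, hsplit⟩ := exists_tree_eq_split hTree hlt hjn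
  rcases hik.eq_or_lt with rfl | hik
  · have hvert : EdgeNoVJump n Q w Tree (((i + 1 : ℕ) : ℤ), (j : ℤ)) ((i : ℤ), (j : ℤ))
        (Q i + w i j) := by
      simpa using EdgeNoVJump.vert (n := n) (Q := Q) (w := w) (T := Tree) (i + 1) j
        i.succ_pos hlt hjn
    refine ((walk_noVJump_tree (i + 1) j hlt hjn).snoc hvert).of_eq ?_
    rw [hsplit, hTree0 i (by omega)]
    ring
  · refine ((walk_noVJump_tree i k hik.le (by omega)).snoc (.hjump i k j hik hkj hjn)).of_eq ?_
    rw [hsplit]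
    ring
termination_by j - i

end TreeRecurrence

theorem stmt9_general (n : ℕ) (Q : ℕ → ℝ)
    (w : ℕ → ℕ → ℝ)
    (Tree : ℕ → ℕ → ℝ)
    (hTree0 : ∀ i, i ≤ n → Tree i i = Q i)
    (hTree : ∀ i j (hij : i < j), j ≤ n →
      Tree i j = (Finset.Ico i j).inf' (Finset.nonempty_Ico.mpr hij)
        (fun k => Tree i k + Tree (k + 1) j + w i j)) :
    ∀ i j, i ≤ j → j ≤ n →
      IsLeast { c : ℝ |
          Walk (EdgeNoVJump n Q w Tree) (-1, -1) ((i : ℤ), (j : ℤ)) c }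
        (Tree i j) ∧
      IsLeast { c : ℝ |
          Walk (Edge n Q w Tree) (-1, -1) ((i : ℤ), (j : ℤ)) c }
        (Tree i j) := by
  intro i j hij hjn
  have hwalk := walk_noVJump_tree hTree0 hTree i j hij hjn
  have hlower : ∀ c, Walk (Edge n Q w Tree) (-1, -1) ((i : ℤ), (j : ℤ)) c → Tree i j ≤ c :=
    fun _ => tree_le_of_walk hTree0 hTree
  exact ⟨⟨hwalk, fun c hc => hlower c (hc.mono fun _ _ _ => EdgeNoVJump.toEdge)⟩,
    ⟨hwalk.mono fun _ _ _ => EdgeNoVJump.toEdge, hlower⟩⟩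

/-- Vertical jumps are redundant: for every vertex `(i,j)` with `0 ≤ i ≤ j ≤ n`,
the minimum total weight over directed paths from `(−1,−1)` to `(i,j)` in the
subgraph `D'_n` (with the vertical jumps deleted) equals the minimum total
weight over directed paths from `(−1,−1)` to `(i,j)` in `D_n`, and both equal
`Tree[i,j]`. -/
theorem stmt9 (n : ℕ) (hn : 1 ≤ n) (P Q : ℕ → ℝ)
    (hP : ∀ t, 1 ≤ t → t ≤ n → 0 ≤ P t) (hQ : ∀ t, t ≤ n → 0 ≤ Q t)
    (w : ℕ → ℕ → ℝ)
    (hw : ∀ i j, i ≤ j → j ≤ n →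
      w i j = (∑ t ∈ Finset.Icc (i + 1) j, P t) + ∑ t ∈ Finset.Icc i j, Q t)
    (Tree : ℕ → ℕ → ℝ)
    (hTree0 : ∀ i, i ≤ n → Tree i i = Q i)
    (hTree : ∀ i j (hij : i < j), j ≤ n →
      Tree i j = (Finset.Ico i j).inf' (Finset.nonempty_Ico.mpr hij)
        (fun k => Tree i k + Tree (k + 1) j + w i j)) :
    ∀ i j, i ≤ j → j ≤ n →
      IsLeast { c : ℝ |
          Walk (EdgeNoVJump n Q w Tree) (-1, -1) ((i : ℤ), (j : ℤ)) c }
        (Tree i j) ∧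
      IsLeast { c : ℝ |
          Walk (Edge n Q w Tree) (-1, -1) ((i : ℤ), (j : ℤ)) c }
        (Tree i j) :=
  stmt9_general n Q w Tree hTree0 hTree
end
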